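/- Let k ≥ 4 and r ∈ {4,…,k}. Let F'_3 be the graph with vertex set {u, v, w, u', v₁, v₂, w₁, w₂} and edges u'v₁, u'v₂, v₁v, v₂v, u'w₁, u'w₂, w₁w, w₂w, uu', v₁v₂, w₁w₂. Let F''_3 be obtained from F'_3 by adding vertices y₄,…,y_k adjacent to all vertices of F'_3 except u, and let F_r = F''_3 − u'y_r. Let f assign colors in [k] to u, v, w, y₄,…,y_k with f(y_i) = i for 4 ≤ i ≤ k. Then f extends to a proper k-coloring of F_r if and only if f(v), f(w) ∈ {1,2,3} and (f(u) ≠ r, or f(v) = f(w)). -/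

import Mathlib

/-- `c` is a proper `k`-coloring of `G` with colors in `[k] = {1,…,k}`. -/
def IsProperKColoring {V : Type*} (G : SimpleGraph V) (k : ℕ) (c : V → ℕ) : Prop :=
  (∀ v, c v ∈ Finset.Icc 1 k) ∧ ∀ ⦃x y⦄, G.Adj x y → c x ≠ c y

/-- Index type for the vertices `y₄, …, y_k`. -/
def Yk (k : ℕ) : Type := {i : ℕ // 4 ≤ i ∧ i ≤ k}

/-- Vertices: `u = 0`, `v = 1`, `w = 2`, `u' = 3`, `v₁ = 4`, `v₂ = 5`, `w₁ = 6`,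
`w₂ = 7`, plus `y₄, …, y_k`.  Edges of `F'₃`: `u'v₁, u'v₂, v₁v, v₂v, u'w₁, u'w₂,
w₁w, w₂w, uu', v₁v₂, w₁w₂`; each `y_j` adjacent to all vertices of `F'₃` except
`u`, with the edge `u'y_r` removed. -/
def relFr (k r : ℕ) : (Fin 8 ⊕ Yk k) → (Fin 8 ⊕ Yk k) → Prop
  | .inl a, .inl b =>
      (a, b) ∈ ([(3,4),(3,5),(4,1),(5,1),(3,6),(3,7),(6,2),(7,2),(0,3),(4,5),(6,7)] :
        List (Fin 8 × Fin 8))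
  | .inl a, .inr j => a ≠ 0 ∧ ¬(a = 3 ∧ j.1 = r)
  | _, _ => False

/-- The gadget `F_r = F''₃ − u'y_r`. -/
def Fr (k r : ℕ) : SimpleGraph (Fin 8 ⊕ Yk k) := SimpleGraph.fromRel (relFr k r)

/-!
Every vertex of `F'₃` other than `u` and `u'` sees all of `y₄, …, y_k`, which are coloured
`4, …, k`, so it gets a colour in `{1,2,3}`; the vertex `u'` misses only `y_r`, so it gets a
colour in `{1,2,3,r}`. If `u'` is coloured from `{1,2,3}`, the triangles `u'v₁v₂` and `v₁v₂v`
force `v` to repeat the colour of `u'`, and likewise `w`; so `f v ≠ f w` forces `u'` to be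
coloured `r`, which requires `f u ≠ r`. Conversely, colour `u'` with `r` if `f u ≠ r`, and
with `f v = f w` otherwise, and each pair `v₁, v₂` (resp. `w₁, w₂`) with the two colours of
`{1,2,3}` other than `f v` (resp. `f w`).
-/

open Finset

def edgesF'₃ : List (Fin 8 × Fin 8) :=
  [(3,4),(3,5),(4,1),(5,1),(3,6),(3,7),(6,2),(7,2),(0,3),(4,5),(6,7)]

lemma isProperKColoring_Fr_iff {k r : ℕ} {c : Fin 8 ⊕ Yk k → ℕ} :
    IsProperKColoring (Fr k r) k c ↔ (∀ x, c x ∈ Icc 1 k) ∧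
      (∀ e ∈ edgesF'₃, c (.inl e.1) ≠ c (.inl e.2)) ∧
      ∀ (p : Fin 8) (y : Yk k), p ≠ 0 → ¬(p = 3 ∧ y.1 = r) → c (.inl p) ≠ c (.inr y) := by
  refine ⟨fun ⟨hrange, hadj⟩ => ⟨hrange, fun e he => hadj ?_, fun p y hp hpy => hadj ?_⟩, ?_⟩
  · have hloop : ∀ e ∈ edgesF'₃, e.1 ≠ e.2 := by decide
    exact (SimpleGraph.fromRel_adj _ _ _).2 ⟨by simpa using hloop e he, Or.inl he⟩
  · exact (SimpleGraph.fromRel_adj _ _ _).2 ⟨by simp, Or.inl ⟨hp, hpy⟩⟩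
  · rintro ⟨hrange, hedge, hy⟩
    refine ⟨hrange, ?_⟩
    rintro (p | y) (q | y') hadj <;> obtain ⟨-, h | h⟩ := (SimpleGraph.fromRel_adj _ _ _).1 hadj
    exacts [hedge (p, q) h, (hedge (q, p) h).symm, hy p y' h.1 h.2, h.elim, h.elim,
      (hy q y h.1 h.2).symm, h.elim, h.elim]

lemma Fr_coloring_mem_Icc_one_three {k r : ℕ} {c : Fin 8 ⊕ Yk k → ℕ}
    (hc : IsProperKColoring (Fr k r) k c) (hy : ∀ y : Yk k, c (.inr y) = y.1) {p : Fin 8}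
    (hp : p ≠ 0) (hpr : ¬(p = 3 ∧ c (.inl p) = r)) : c (.inl p) ∈ Icc 1 3 := by
  have hk := mem_Icc.1 (hc.1 (.inl p))
  refine mem_Icc.2 ⟨hk.1, not_lt.1 fun h4 => ?_⟩
  let y : Yk k := ⟨c (.inl p), h4, hk.2⟩
  exact (isProperKColoring_Fr_iff.1 hc).2.2 p y hp hpr (hy y).symm

lemma Fr_necessary {k r : ℕ} {c : Fin 8 ⊕ Yk k → ℕ}
    (hc : IsProperKColoring (Fr k r) k c) (hy : ∀ y : Yk k, c (.inr y) = y.1) :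
    c (.inl 1) ∈ ({1,2,3} : Set ℕ) ∧ c (.inl 2) ∈ ({1,2,3} : Set ℕ) ∧
      (c (.inl 0) ≠ r ∨ c (.inl 1) = c (.inl 2)) := by
  have hlow : ∀ p ∈ ({1, 2, 4, 5, 6, 7} : Finset (Fin 8)), c (.inl p) ∈ Icc 1 3 := fun p hp =>
    Fr_coloring_mem_Icc_one_three hc hy (by rintro rfl; simp at hp)
      (by rintro ⟨rfl, -⟩; simp at hp)
  have hu' : c (.inl 3) = r ∨ c (.inl 3) ∈ Icc 1 3 :=
    or_iff_not_imp_left.2 fun h => Fr_coloring_mem_Icc_one_three hc hy (by decide) (h ·.2)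
  have hedge := (isProperKColoring_Fr_iff.1 hc).2.1
  simp only [edgesF'₃, List.forall_mem_cons, List.not_mem_nil, IsEmpty.forall_iff,
    implies_true, and_true] at hedge
  simp only [Finset.mem_insert, Finset.mem_singleton, forall_eq_or_imp, forall_eq, mem_Icc]
    at hlow hu'
  simp only [Set.mem_insert_iff, Set.mem_singleton_iff]
  -- if `c u' ≤ 3`, the triangles `u'v₁v₂`, `v₁v₂v` and `u'w₁w₂`, `w₁w₂w` give `c v = c u' = c w`
  omega

def otherLow (a : ℕ) : ℕ := if a = 1 then 2 else 1

def otherHigh (a : ℕ) : ℕ := if a = 3 then 2 else 3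

lemma otherLow_otherHigh_spec {a : ℕ} (ha : a ∈ ({1,2,3} : Set ℕ)) :
    otherLow a ∈ Icc 1 3 ∧ otherHigh a ∈ Icc 1 3 ∧
      otherLow a ≠ a ∧ otherHigh a ≠ a ∧ otherLow a ≠ otherHigh a := by
  simp only [Set.mem_insert_iff, Set.mem_singleton_iff] at ha
  rcases ha with rfl | rfl | rfl <;> decide

def extendedColoring (k cu cv cw cu' : ℕ) : Fin 8 ⊕ Yk k → ℕ
  | .inl p => ![cu, cv, cw, cu', otherLow cv, otherHigh cv, otherLow cw, otherHigh cw] p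
  | .inr y => y.1

lemma extendedColoring_isProperKColoring {k r cu cv cw cu' : ℕ} (hr : 4 ≤ r ∧ r ≤ k)
    (hu : cu ∈ Icc 1 k) (hv : cv ∈ ({1,2,3} : Set ℕ)) (hw : cw ∈ ({1,2,3} : Set ℕ))
    (hu'u : cu' ≠ cu) (hu' : cu' = r ∨ cu' = cv ∧ cu' = cw) :
    IsProperKColoring (Fr k r) k (extendedColoring k cu cv cw cu') := by
  have hv' := otherLow_otherHigh_spec hv
  have hw' := otherLow_otherHigh_spec hw
  simp only [Set.mem_insert_iff, Set.mem_singleton_iff] at hv hw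
  simp only [mem_Icc] at hu hv' hw'
  refine isProperKColoring_Fr_iff.2 ⟨?_, ?_, ?_⟩
  · rintro (p | ⟨i, hi⟩)
    · fin_cases p <;> simp [extendedColoring] <;> omega
    · simp only [extendedColoring, mem_Icc]
      omega
  · simp only [edgesF'₃, List.forall_mem_cons, List.not_mem_nil, IsEmpty.forall_iff,
      implies_true, and_true, extendedColoring, Matrix.cons_val]
    omega
  · rintro p ⟨i, hi⟩ hp0 hp3
    fin_cases p <;> simp [extendedColoring] at hp0 hp3 ⊢ <;> omega

theorem Fr_extension_general (k r : ℕ) (hr : 4 ≤ r ∧ r ≤ k)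
    (f : (Fin 8 ⊕ Yk k) → ℕ)
    (hfu : f (.inl 0) ∈ Finset.Icc 1 k)
    (hfy : ∀ y : Yk k, f (.inr y) = y.1) :
    (∃ c : (Fin 8 ⊕ Yk k) → ℕ, IsProperKColoring (Fr k r) k c ∧
        c (.inl 0) = f (.inl 0) ∧ c (.inl 1) = f (.inl 1) ∧ c (.inl 2) = f (.inl 2) ∧
        ∀ y : Yk k, c (.inr y) = f (.inr y)) ↔
      (f (.inl 1) ∈ ({1,2,3} : Set ℕ) ∧ f (.inl 2) ∈ ({1,2,3} : Set ℕ) ∧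
        (f (.inl 0) ≠ r ∨ f (.inl 1) = f (.inl 2))) := by
  constructor
  · rintro ⟨c, hc, hu, hv, hw, hy⟩
    rw [← hu, ← hv, ← hw]
    exact Fr_necessary hc fun y => (hy y).trans (hfy y)
  · rintro ⟨hv, hw, hvw⟩
    obtain ⟨cu', hu'u, hu'⟩ :
        ∃ cu', cu' ≠ f (.inl 0) ∧ (cu' = r ∨ cu' = f (.inl 1) ∧ cu' = f (.inl 2)) := by
      by_cases hur : f (.inl 0) = r
      · refine ⟨f (.inl 1), ?_, Or.inr ⟨rfl, hvw.resolve_left (not_not.2 hur)⟩⟩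
        simp only [Set.mem_insert_iff, Set.mem_singleton_iff] at hv
        omega
      · exact ⟨r, Ne.symm hur, Or.inl rfl⟩
    exact ⟨extendedColoring k _ _ _ cu', extendedColoring_isProperKColoring hr hfu hv hw hu'u hu',
      rfl, rfl, rfl, fun y => (hfy y).symm⟩

/-- A function `f` on `{u, v, w, y₄, …, y_k}` with `f(yᵢ) = i` extends to a proper
`k`-coloring of `F_r` iff `f v, f w ∈ {1,2,3}` and (`f u ≠ r` or `f v = f w`). -/
theorem Fr_extension (k r : ℕ) (hk : 4 ≤ k) (hr : 4 ≤ r ∧ r ≤ k)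
    (f : (Fin 8 ⊕ Yk k) → ℕ)
    (hfu : f (.inl 0) ∈ Finset.Icc 1 k) (hfv : f (.inl 1) ∈ Finset.Icc 1 k)
    (hfw : f (.inl 2) ∈ Finset.Icc 1 k)
    (hfy : ∀ y : Yk k, f (.inr y) = y.1) :
    (∃ c : (Fin 8 ⊕ Yk k) → ℕ, IsProperKColoring (Fr k r) k c ∧
        c (.inl 0) = f (.inl 0) ∧ c (.inl 1) = f (.inl 1) ∧ c (.inl 2) = f (.inl 2) ∧
        ∀ y : Yk k, c (.inr y) = f (.inr y)) ↔
      (f (.inl 1) ∈ ({1,2,3} : Set ℕ) ∧ f (.inl 2) ∈ ({1,2,3} : Set ℕ) ∧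
        (f (.inl 0) ≠ r ∨ f (.inl 1) = f (.inl 2))) :=
  Fr_extension_general k r hr f hfu hfy
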